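/- arXiv:2502.20028 — 5 statements merged into one kernel-verified Lean document; each statement's English description precedes it below -/
import Mathlib

section
/- Fix integers n ≥ 1 and k ≥ 1, and let V_1, …, V_n : ℂⁿ → ℂ be polynomial functions of degree at most k. Let Ω = {x ∈ ℂⁿ : x_1 ≠ 0} and define the holomorphic map Φ : Ω × ℂ → ℂⁿ × ℂ by Φ(x,t) = ((1/x_1, x_2/x_1, …, x_n/x_1), x_1^k t). Then there exists a polynomial map W : ℂⁿ × ℂ → ℂⁿ × ℂ (each component a polynomial in the n+1 complex variables) such that: (i) for every (x,t) ∈ Ω × ℂ, the Fréchet derivative of Φ at (x,t) applied to the vector V(x,t) = (t V_1(x), …, t V_n(x), 0) equals W(Φ(x,t)); and (ii) W(x', t') = 0 whenever x'_1 = 0 or t' = 0. -/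
/-- The projective coordinate change on the affine chart `{x : xₗ ≠ 0}`. -/
noncomputable def projCoordChange (n : ℕ) [NeZero n] (x : Fin n → ℂ) : Fin n → ℂ :=
  fun i => if i = 0 then (x 0)⁻¹ else x i / x 0

/-- The coordinate change combined with the line bundle transition `t ↦ x₁ᵏ t`. -/
noncomputable def lineBundleChange (n k : ℕ) [NeZero n] (p : (Fin n → ℂ) × ℂ) :
    (Fin n → ℂ) × ℂ :=
  (projCoordChange n p.1, (p.1 0) ^ k * p.2)

/-!
Since `projCoordChange` is an involution of the chart `x₀ ≠ 0`, a polynomial `p` of degree at most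
`k` satisfies `p(x) = x₀ᵏ P(Φ(x))` with `P(y) = y₀ᵏ p(1/y₀, y₁/y₀, …)`, which is again a
polynomial. Differentiating `Φ` along `(t V(x), 0)` and substituting
`x₀ = 1/y₀`, `xᵢ = yᵢ/y₀`, `t = s y₀ᵏ` turns the pushed-forward field into
`W(y, s) = (-s y₀² P₀(y), s y₀ (Pᵢ(y) - yᵢ P₀(y)), k s² y₀ P₀(y))`,
which is polynomial and divisible by `s y₀`.
-/

open MvPolynomial Finset

theorem MvPolynomial.IsHomogeneous.eval_smul {σ R : Type*} [CommSemiring R]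
    {φ : MvPolynomial σ R} {m : ℕ} (hφ : φ.IsHomogeneous m) (c : R) (x : σ → R) :
    eval (c • x) φ = c ^ m * eval x φ := by
  conv_lhs => rw [φ.as_sum]
  conv_rhs => rw [φ.as_sum]
  simp only [map_sum, mul_sum, eval_monomial]
  refine sum_congr rfl fun d hd => ?_
  simp only [Pi.smul_apply, smul_eq_mul, mul_pow, Finsupp.prod_mul]
  rw [Finsupp.prod, prod_pow_eq_pow_sum, ← hφ.degree_eq_sum_deg_support hd]
  ring

theorem MvPolynomial.eval_bind₁_update_X {σ R : Type*} [CommSemiring R] [DecidableEq σ]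
    (i : σ) (r : R) (q : MvPolynomial σ R) (y : σ → R) :
    eval y (bind₁ (Function.update X i (C r)) q) = eval (Function.update y i r) q := by
  rw [eval, eval₂Hom_bind₁]
  congr 2
  funext j
  rcases eq_or_ne j i with rfl | hj <;> simp [*]

theorem MvPolynomial.sum_homogeneousComponent_of_totalDegree_le {σ R : Type*} [CommSemiring R]
    {φ : MvPolynomial σ R} {k : ℕ} (h : φ.totalDegree ≤ k) :
    ∑ j ∈ range (k + 1), homogeneousComponent j φ = φ := by
  conv_rhs => rw [← sum_homogeneousComponent φ]
  refine (sum_subset (range_subset_range.mpr (by omega)) fun j _ hj => ?_).symm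
  exact homogeneousComponent_eq_zero j φ (by simpa using hj)

theorem MvPolynomial.eval_snoc_rename_castSucc {R : Type*} [CommSemiring R] {n : ℕ}
    (y : Fin n → R) (s : R) (p : MvPolynomial (Fin n) R) :
    eval (Fin.snoc y s) (rename Fin.castSucc p) = eval y p := by
  rw [eval_rename, Fin.snoc_comp_castSucc]

section Chart

variable {n : ℕ} [NeZero n]

@[simp]
theorem projCoordChange_zero (x : Fin n → ℂ) : projCoordChange n x 0 = (x 0)⁻¹ := if_pos rfl

theorem projCoordChange_of_ne_zero (x : Fin n → ℂ) {i : Fin n} (hi : i ≠ 0) :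
    projCoordChange n x i = x i / x 0 := if_neg hi

theorem update_projCoordChange {x : Fin n → ℂ} (hx : x 0 ≠ 0) :
    Function.update (projCoordChange n x) 0 1 = (x 0)⁻¹ • x := by
  funext i
  rcases eq_or_ne i 0 with rfl | hi
  · simp [hx]
  · simp [hi, projCoordChange_of_ne_zero x hi, div_eq_inv_mul]

/-- The polynomial `y ↦ y₀ᵏ p(1/y₀, y₁/y₀, …)` when `totalDegree p ≤ k`: the homogeneous
component `p_j` of `p` contributes `y₀^(k-j) p_j(1, y₁, …)`. -/
noncomputable def chartTransform (k : ℕ) (p : MvPolynomial (Fin n) ℂ) : MvPolynomial (Fin n) ℂ :=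
  ∑ j ∈ range (k + 1),
    X 0 ^ (k - j) * bind₁ (Function.update X 0 (C 1)) (homogeneousComponent j p)

theorem eval_eq_pow_mul_eval_chartTransform {k : ℕ} {p : MvPolynomial (Fin n) ℂ}
    (hp : p.totalDegree ≤ k) {x : Fin n → ℂ} (hx : x 0 ≠ 0) :
    eval x p = x 0 ^ k * eval (projCoordChange n x) (chartTransform k p) := by
  have heval : ∀ j ∈ range (k + 1), x 0 ^ k * eval (projCoordChange n x)
      (X 0 ^ (k - j) * bind₁ (Function.update X 0 (C 1)) (homogeneousComponent j p)) =
      eval x (homogeneousComponent j p) := by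
    intro j hj
    have hjk : k - j + j = k := Nat.sub_add_cancel (Nat.lt_succ_iff.mp (mem_range.mp hj))
    rw [eval_mul, eval_bind₁_update_X, update_projCoordChange hx,
      (homogeneousComponent_isHomogeneous j p).eval_smul, map_pow, eval_X, projCoordChange_zero,
      ← mul_assoc ((x 0)⁻¹ ^ (k - j)), ← pow_add, hjk, ← mul_assoc, ← mul_pow,
      mul_inv_cancel₀ hx, one_pow, one_mul]
  rw [chartTransform, map_sum, mul_sum, sum_congr rfl heval, ← map_sum,
    sum_homogeneousComponent_of_totalDegree_le hp]

end Chart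

section Derivative

variable {n : ℕ} [NeZero n] (k : ℕ) {x : Fin n → ℂ} (t : ℂ)

theorem differentiableAt_lineBundleChange (hx : x 0 ≠ 0) :
    DifferentiableAt ℂ (lineBundleChange n k) (x, t) := by
  refine DifferentiableAt.prodMk (differentiableAt_pi.mpr fun i => ?_) (by fun_prop)
  unfold projCoordChange
  split_ifs <;> fun_prop (disch := simpa using hx)

theorem hasLineDerivAt_lineBundleChange (hx : x 0 ≠ 0) (v : Fin n → ℂ) (τ : ℂ) :
    HasLineDerivAt ℂ (lineBundleChange n k)
      ((fun i => if i = 0 then -(v 0 / x 0 ^ 2) else v i / x 0 - x i * v 0 / x 0 ^ 2),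
        k * x 0 ^ (k - 1) * v 0 * t + x 0 ^ k * τ) (x, t) (v, τ) := by
  have hline (a b : ℂ) : HasDerivAt (fun s : ℂ => a + s * b) b 0 := by
    simpa using ((hasDerivAt_id (0 : ℂ)).mul_const b).const_add a
  have hx' : x 0 + 0 * v 0 ≠ 0 := by simpa using hx
  refine HasDerivAt.prodMk (hasDerivAt_pi.mpr fun i => ?_) ?_
  · simp only [Prod.fst_add, Prod.smul_fst]
    rcases eq_or_ne i 0 with rfl | hi
    · simp only [projCoordChange_zero, Pi.add_apply, Pi.smul_apply, smul_eq_mul]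
      exact ((hline _ _).inv hx').congr_deriv (by simp [neg_div])
    · simp only [projCoordChange_of_ne_zero _ hi, Pi.add_apply, Pi.smul_apply, smul_eq_mul]
      exact ((hline _ _).div (hline _ _) hx').congr_deriv (by simp [hi]; field_simp)
  · simp only [Prod.fst_add, Prod.smul_fst, Prod.snd_add, Prod.smul_snd,
      Pi.add_apply, Pi.smul_apply, smul_eq_mul]
    exact (((hline _ _).pow k).mul (hline _ _)).congr_deriv (by simp)

theorem fderiv_lineBundleChange_apply (hx : x 0 ≠ 0) (v : Fin n → ℂ) (τ : ℂ) :
    fderiv ℂ (lineBundleChange n k) (x, t) (v, τ) =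
      ((fun i => if i = 0 then -(v 0 / x 0 ^ 2) else v i / x 0 - x i * v 0 / x 0 ^ 2),
        k * x 0 ^ (k - 1) * v 0 * t + x 0 ^ k * τ) :=
  (differentiableAt_lineBundleChange k t hx).lineDeriv_eq_fderiv.symm.trans
    (hasLineDerivAt_lineBundleChange k t hx v τ).lineDeriv

end Derivative

section PushforwardField

variable {n : ℕ} [NeZero n] (k : ℕ) (P : Fin n → MvPolynomial (Fin n) ℂ)

noncomputable def pushforwardField (q : (Fin n → ℂ) × ℂ) : (Fin n → ℂ) × ℂ :=
  ((fun i => if i = 0 then -(q.2 * q.1 0 ^ 2 * eval q.1 (P 0))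
      else q.2 * q.1 0 * (eval q.1 (P i) - q.1 i * eval q.1 (P 0))),
    k * q.2 ^ 2 * q.1 0 * eval q.1 (P 0))

theorem pushforwardField_eq_zero {q : (Fin n → ℂ) × ℂ} (hq : q.1 0 = 0 ∨ q.2 = 0) :
    pushforwardField k P q = 0 := by
  ext i
  · rcases eq_or_ne i 0 with rfl | hi <;> rcases hq with hq | hq <;> simp [pushforwardField, *]
  · rcases hq with hq | hq <;> simp [pushforwardField, hq]

theorem exists_polynomial_pushforwardField :
    ∃ Q : Fin n → MvPolynomial (Fin (n + 1)) ℂ, ∃ Qt : MvPolynomial (Fin (n + 1)) ℂ,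
      ∀ q : (Fin n → ℂ) × ℂ, pushforwardField k P q =
        (fun i => eval (Fin.snoc q.1 q.2) (Q i), eval (Fin.snoc q.1 q.2) Qt) := by
  let Y (i : Fin n) : MvPolynomial (Fin (n + 1)) ℂ := X (Fin.castSucc i)
  let S : MvPolynomial (Fin (n + 1)) ℂ := X (Fin.last n)
  let P' (j : Fin n) := rename Fin.castSucc (P j)
  refine ⟨fun i => if i = 0 then -(S * Y 0 ^ 2 * P' 0) else S * Y 0 * (P' i - Y i * P' 0),
    C (k : ℂ) * S ^ 2 * Y 0 * P' 0, fun q => ?_⟩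
  ext i
  · rcases eq_or_ne i 0 with rfl | hi <;>
      simp [pushforwardField, Y, S, P', eval_snoc_rename_castSucc, *]
  · simp [pushforwardField, Y, S, P', eval_snoc_rename_castSucc]

theorem fderiv_lineBundleChange_eq_pushforwardField {x : Fin n → ℂ} (t : ℂ) (hx : x 0 ≠ 0)
    (v : Fin n → ℂ) (hv : ∀ j, v j = x 0 ^ k * eval (projCoordChange n x) (P j)) :
    fderiv ℂ (lineBundleChange n k) (x, t) (fun i => t * v i, 0) =
      pushforwardField k P (lineBundleChange n k (x, t)) := by
  rw [fderiv_lineBundleChange_apply k t hx]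
  simp only [pushforwardField, lineBundleChange, hv]
  refine Prod.ext (funext fun i => ?_) ?_
  · rcases eq_or_ne i 0 with rfl | hi
    · simp only [if_pos, projCoordChange_zero]
      field_simp
    · simp only [if_neg hi, projCoordChange_zero, projCoordChange_of_ne_zero x hi]
      field_simp
  · rcases k with _ | k
    · simp
    · simp only [projCoordChange_zero, Nat.add_sub_cancel]
      field_simp
      ring

end PushforwardField

theorem extends_to_polynomial_field_rank_one_general (n k : ℕ) [NeZero n]
    (V : Fin n → (Fin n → ℂ) → ℂ)
    (hV : ∀ i, ∃ p : MvPolynomial (Fin n) ℂ,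
      p.totalDegree ≤ k ∧ ∀ x, V i x = MvPolynomial.eval x p) :
    ∃ W : (Fin n → ℂ) × ℂ → (Fin n → ℂ) × ℂ,
      (∃ Q : Fin n → MvPolynomial (Fin (n + 1)) ℂ, ∃ Qt : MvPolynomial (Fin (n + 1)) ℂ,
        ∀ p : (Fin n → ℂ) × ℂ,
          W p = (fun i => MvPolynomial.eval (Fin.snoc p.1 p.2) (Q i),
                 MvPolynomial.eval (Fin.snoc p.1 p.2) Qt)) ∧
      (∀ (x : Fin n → ℂ) (t : ℂ), x 0 ≠ 0 →
        fderiv ℂ (lineBundleChange n k) (x, t) ((fun i => t * V i x), (0 : ℂ)) =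
          W (lineBundleChange n k (x, t))) ∧
      (∀ (x' : Fin n → ℂ) (t' : ℂ), x' 0 = 0 ∨ t' = 0 → W (x', t') = 0) := by
  choose p hdeg hev using hV
  obtain ⟨Q, Qt, hQ⟩ := exists_polynomial_pushforwardField k fun j => chartTransform k (p j)
  refine ⟨pushforwardField k fun j => chartTransform k (p j), ⟨Q, Qt, hQ⟩, fun x t hx => ?_,
    fun x' t' h => pushforwardField_eq_zero _ _ h⟩
  exact fderiv_lineBundleChange_eq_pushforwardField _ _ t hx _ fun j => by
    rw [hev, eval_eq_pow_mul_eval_chartTransform (hdeg j) hx]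

/-- Chart-level content of Lemma 2.2, case `m = 1`: the vector field
`V(x,t) = ∑ᵢ t Vᵢ(x) ∂ₓᵢ`, pushed forward by the coordinate change
`Φ(x,t) = ((1/x₁, x₂/x₁, …, xₙ/x₁), x₁ᵏ t)`, extends to a polynomial vector field `W`
on `ℂⁿ × ℂ` vanishing on `{x'₁ = 0}` and on `{t' = 0}`. -/
theorem extends_to_polynomial_field_rank_one (n k : ℕ) [NeZero n] (hk : 1 ≤ k)
    (V : Fin n → (Fin n → ℂ) → ℂ)
    (hV : ∀ i, ∃ p : MvPolynomial (Fin n) ℂ,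
      p.totalDegree ≤ k ∧ ∀ x, V i x = MvPolynomial.eval x p) :
    ∃ W : (Fin n → ℂ) × ℂ → (Fin n → ℂ) × ℂ,
      (∃ Q : Fin n → MvPolynomial (Fin (n + 1)) ℂ, ∃ Qt : MvPolynomial (Fin (n + 1)) ℂ,
        ∀ p : (Fin n → ℂ) × ℂ,
          W p = (fun i => MvPolynomial.eval (Fin.snoc p.1 p.2) (Q i),
                 MvPolynomial.eval (Fin.snoc p.1 p.2) Qt)) ∧
      (∀ (x : Fin n → ℂ) (t : ℂ), x 0 ≠ 0 →
        fderiv ℂ (lineBundleChange n k) (x, t) ((fun i => t * V i x), (0 : ℂ)) =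
          W (lineBundleChange n k (x, t))) ∧
      (∀ (x' : Fin n → ℂ) (t' : ℂ), x' 0 = 0 ∨ t' = 0 → W (x', t') = 0) :=
  extends_to_polynomial_field_rank_one_general n k V hV
end

section
/- Fix integers n ≥ 1, m ≥ 1, k ≥ 1, and let V_{i,j} : ℂⁿ → ℂ (1 ≤ i ≤ n, 1 ≤ j ≤ m) be polynomial functions of degree at most k. Let Ω = {x ∈ ℂⁿ : x_1 ≠ 0} and define the holomorphic map Φ : Ω × ℂᵐ → ℂⁿ × ℂᵐ by Φ(x,t) = ((1/x_1, x_2/x_1, …, x_n/x_1), x_1^k t). Then there exists a polynomial map W : ℂⁿ × ℂᵐ → ℂⁿ × ℂᵐ (each component a polynomial in the n+m complex variables) such that: (i) for every (x,t) ∈ Ω × ℂᵐ, the Fréchet derivative of Φ at (x,t) applied to the vector V(x,t) = ((Σ_{j=1}^m t_j V_{1,j}(x), …, Σ_{j=1}^m t_j V_{n,j}(x)), 0) equals W(Φ(x,t)); and (ii) W(x', t') = 0 whenever x'_1 = 0 or t' = 0. -/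
/-- The coordinate change combined with the rank-`m` bundle transition `t ↦ x₁ᵏ t`. -/
noncomputable def bundleChange (n m k : ℕ) [NeZero n] (p : (Fin n → ℂ) × (Fin m → ℂ)) :
    (Fin n → ℂ) × (Fin m → ℂ) :=
  (projCoordChange n p.1, (p.1 0) ^ k • p.2)

/-!
Write `(y, s) = Φ(x, t)`. Since `projCoordChange` is an involution of `{x₁ ≠ 0}`, we have
`V_{i,j}(x) = x₁ᵏ Ṽ_{i,j}(y)` with `Ṽ_{i,j}(y) = y₁ᵏ V_{i,j}(projCoordChange y)`, a polynomial
because `deg V_{i,j} ≤ k`. Hence the horizontal vector is `a_i = ∑ⱼ sⱼ Ṽ_{i,j}(y)`, linear in `s`,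
and `dΦ` sends it to `(-y₁² a₁, y₁ (a_i - y_i a₁), k y₁ a₁ s)`: polynomial in `(y, s)`, and
vanishing where `y₁ = 0` or `s = 0`.
-/

open MvPolynomial Finset ContinuousLinearMap

namespace MvPolynomial

variable {σ R : Type*} [CommSemiring R]

theorem IsHomogeneous.eval_smul_s2 {φ : MvPolynomial σ R} {e : ℕ} (hφ : φ.IsHomogeneous e)
    (c : R) (x : σ → R) : eval (c • x) φ = c ^ e * eval x φ := by
  simp only [eval_eq, mul_sum]
  refine sum_congr rfl fun d hd => ?_
  rw [← hφ (mem_support_iff.mp hd)]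
  simp only [Pi.smul_apply, smul_eq_mul, mul_pow, prod_mul_distrib, prod_pow_eq_pow_sum,
    Finsupp.weight_apply, Finsupp.sum, Pi.one_apply, mul_one]
  ring

theorem sum_homogeneousComponent_of_totalDegree_le_s2 {φ : MvPolynomial σ R} {k : ℕ}
    (h : φ.totalDegree ≤ k) : ∑ e ∈ range (k + 1), homogeneousComponent e φ = φ := by
  ext1 d
  suffices k < d.support.sum d → 0 = coeff d φ by
    simpa [coeff_sum, coeff_homogeneousComponent]
  exact fun hk => (coeff_eq_zero_of_totalDegree_lt (h.trans_lt hk)).symm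

variable [DecidableEq σ]

theorem eval_aeval_update_X_one (i₀ : σ) (y : σ → R) (q : MvPolynomial σ R) :
    eval y (aeval (Function.update X i₀ 1) q) = eval (Function.update y i₀ 1) q := by
  rw [aeval_eq_bind₁]
  refine (eval₂Hom_bind₁ _ _ _ _).trans (congrArg (eval · q) ?_)
  ext i
  rcases eq_or_ne i i₀ with rfl | h <;> simp [*]

/-- `Y_{i₀}ᵏ · p(Y_{i₀}⁻¹ • Y[i₀ ↦ 1])`, a polynomial when `totalDegree p ≤ k`: the homogeneous
component of `p` of degree `e` contributes `Y_{i₀}^(k - e)`. -/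
noncomputable def homogenizeAt (i₀ : σ) (k : ℕ) (p : MvPolynomial σ R) : MvPolynomial σ R :=
  ∑ e ∈ range (k + 1), X i₀ ^ (k - e) * aeval (Function.update X i₀ 1) (homogeneousComponent e p)

theorem eval_homogenizeAt {K : Type*} [Field K] {i₀ : σ} {k : ℕ} {p : MvPolynomial σ K}
    (hp : p.totalDegree ≤ k) {y : σ → K} (hy : y i₀ ≠ 0) :
    eval y (homogenizeAt i₀ k p) = y i₀ ^ k * eval ((y i₀)⁻¹ • Function.update y i₀ 1) p := by
  conv_rhs => rw [← sum_homogeneousComponent_of_totalDegree_le_s2 hp, map_sum, mul_sum]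
  simp only [homogenizeAt, map_sum, map_mul, map_pow, eval_X]
  refine sum_congr rfl fun e he => ?_
  have hek : e ≤ k := Nat.lt_succ_iff.mp (mem_range.mp he)
  rw [(homogeneousComponent_isHomogeneous e p).eval_smul_s2, eval_aeval_update_X_one, ← mul_assoc,
    inv_pow, pow_sub₀ _ hy hek]

end MvPolynomial

section HorizontalPushforward

variable {R : Type*} [CommRing R] {n m : ℕ} [NeZero n]

/-- The differential of `bundleChange` applied to the horizontal vector `a`, written in the
coordinates `(y, s)` of the image point. -/
def horizontalPushforward (k : ℕ) (y : Fin n → R) (s : Fin m → R) (a : Fin n → R) :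
    (Fin n → R) × (Fin m → R) :=
  (fun i => if i = 0 then -(y 0 ^ 2 * a 0) else y 0 * (a i - y i * a 0),
   fun j => k * y 0 * a 0 * s j)

theorem map_horizontalPushforward {S : Type*} [CommRing S] (f : R →+* S) (k : ℕ)
    (y : Fin n → R) (s : Fin m → R) (a : Fin n → R) :
    Prod.map (f ∘ ·) (f ∘ ·) (horizontalPushforward k y s a) =
      horizontalPushforward k (f ∘ y) (f ∘ s) (f ∘ a) := by
  ext i <;> simp [horizontalPushforward, apply_ite f]

theorem horizontalPushforward_eq_zero_of_apply_zero_eq_zero (k : ℕ) {y : Fin n → R} (hy : y 0 = 0)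
    (s : Fin m → R) (a : Fin n → R) : horizontalPushforward k y s a = 0 := by
  ext i <;> simp [horizontalPushforward, hy]

theorem horizontalPushforward_zero (k : ℕ) (y : Fin n → R) (s : Fin m → R) :
    horizontalPushforward k y s 0 = 0 := by
  ext i <;> simp [horizontalPushforward]

end HorizontalPushforward

section Chart

variable {n : ℕ} [NeZero n]

theorem projCoordChange_eq_smul_update (x : Fin n → ℂ) :
    projCoordChange n x = (x 0)⁻¹ • Function.update x 0 1 := by
  ext i
  rcases eq_or_ne i 0 with rfl | hi <;> simp [projCoordChange, *, div_eq_inv_mul]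

theorem projCoordChange_projCoordChange {x : Fin n → ℂ} (hx : x 0 ≠ 0) :
    projCoordChange n (projCoordChange n x) = x := by
  ext i
  rcases eq_or_ne i 0 with rfl | hi <;> simp [projCoordChange, *]

theorem pow_mul_eval_projCoordChange_homogenizeAt {k : ℕ} {p : MvPolynomial (Fin n) ℂ}
    (hp : p.totalDegree ≤ k) {x : Fin n → ℂ} (hx : x 0 ≠ 0) :
    x 0 ^ k * eval (projCoordChange n x) (homogenizeAt 0 k p) = eval x p := by
  have hy : projCoordChange n x 0 = (x 0)⁻¹ := by simp [projCoordChange]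
  rw [eval_homogenizeAt hp (by simpa [hy]), ← projCoordChange_eq_smul_update,
    projCoordChange_projCoordChange hx, hy, ← mul_assoc, ← mul_pow, mul_inv_cancel₀ hx, one_pow,
    one_mul]

theorem hasFDerivAt_inv_apply_zero {x : Fin n → ℂ} (hx : x 0 ≠ 0) :
    HasFDerivAt (fun x : Fin n → ℂ => (x 0)⁻¹)
      (-(x 0 ^ 2)⁻¹ • (proj 0 : (Fin n → ℂ) →L[ℂ] ℂ)) x := by
  refine ((hasFDerivAt_inv hx).comp x (hasFDerivAt_apply (𝕜 := ℂ) 0 x)).congr_fderiv ?_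
  ext v
  simp [mul_comm]

theorem hasFDerivAt_projCoordChange {x : Fin n → ℂ} (hx : x 0 ≠ 0) :
    HasFDerivAt (projCoordChange n) (ContinuousLinearMap.pi fun i : Fin n =>
      if i = 0 then -(x 0 ^ 2)⁻¹ • (proj 0 : (Fin n → ℂ) →L[ℂ] ℂ)
      else (x 0)⁻¹ • (proj i : (Fin n → ℂ) →L[ℂ] ℂ) - (x i / x 0 ^ 2) • proj 0) x := by
  refine hasFDerivAt_pi'' fun i => ?_
  rw [proj_pi]
  rcases eq_or_ne i 0 with rfl | hi
  · simpa [projCoordChange] using hasFDerivAt_inv_apply_zero hx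
  · simp only [projCoordChange, hi, if_false, div_eq_mul_inv]
    refine ((hasFDerivAt_apply (𝕜 := ℂ) i x).fun_mul
      (hasFDerivAt_inv_apply_zero hx)).congr_fderiv ?_
    ext v
    simp only [add_apply, smul_apply, proj_apply, smul_eq_mul, sub_apply]
    ring

theorem fderiv_bundleChange_apply {m : ℕ} (k : ℕ) {x : Fin n → ℂ} (hx : x 0 ≠ 0)
    (t : Fin m → ℂ) (v : Fin n → ℂ) :
    fderiv ℂ (bundleChange n m k) (x, t) (v, 0) =
      horizontalPushforward k (projCoordChange n x) (x 0 ^ k • t) v := by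
  have hfst : HasFDerivAt (Prod.fst : (Fin n → ℂ) × (Fin m → ℂ) → Fin n → ℂ)
      (fst ℂ (Fin n → ℂ) (Fin m → ℂ)) (x, t) := hasFDerivAt_fst
  have hchart := (hasFDerivAt_projCoordChange hx).comp (x, t) hfst
  have hpow := (((hasFDerivAt_apply (𝕜 := ℂ) 0 x).comp (x, t) hfst).pow k).smul
    (hasFDerivAt_snd (p := (x, t)))
  have H : HasFDerivAt (bundleChange n m k) _ (x, t) := hchart.prodMk hpow
  rw [H.fderiv]
  ext i
  · rcases eq_or_ne i 0 with rfl | hi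
    · simp [horizontalPushforward, projCoordChange]
    · simp only [ContinuousLinearMap.prod_apply, comp_apply, coe_fst', coe_pi', hi, ↓reduceIte,
        sub_apply, smul_apply, proj_apply, smul_eq_mul, horizontalPushforward, projCoordChange]
      field_simp
  · rcases k with _ | k
    · simp [horizontalPushforward]
    · simp only [ContinuousLinearMap.prod_apply, add_apply, smul_apply, coe_snd', smul_zero,
        smulRight_apply, comp_apply, coe_fst', proj_apply, zero_add, Function.comp_apply,
        smul_eq_mul, Pi.smul_apply, nsmul_eq_mul, horizontalPushforward, projCoordChange,
        ↓reduceIte, add_tsub_cancel_right, Nat.cast_succ, pow_succ]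
      field_simp

end Chart

theorem extends_to_polynomial_field_general (n m k : ℕ) [NeZero n]
    (V : Fin n → Fin m → (Fin n → ℂ) → ℂ)
    (hV : ∀ i j, ∃ p : MvPolynomial (Fin n) ℂ,
      p.totalDegree ≤ k ∧ ∀ x, V i j x = MvPolynomial.eval x p) :
    ∃ W : (Fin n → ℂ) × (Fin m → ℂ) → (Fin n → ℂ) × (Fin m → ℂ),
      (∃ Q : Fin n → MvPolynomial (Fin n ⊕ Fin m) ℂ,
       ∃ Qt : Fin m → MvPolynomial (Fin n ⊕ Fin m) ℂ,
        ∀ p : (Fin n → ℂ) × (Fin m → ℂ),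
          W p = (fun i => MvPolynomial.eval (Sum.elim p.1 p.2) (Q i),
                 fun j => MvPolynomial.eval (Sum.elim p.1 p.2) (Qt j))) ∧
      (∀ (x : Fin n → ℂ) (t : Fin m → ℂ), x 0 ≠ 0 →
        fderiv ℂ (bundleChange n m k) (x, t)
            ((fun i => ∑ j, t j * V i j x), (0 : Fin m → ℂ)) =
          W (bundleChange n m k (x, t))) ∧
      (∀ (x' : Fin n → ℂ) (t' : Fin m → ℂ), x' 0 = 0 ∨ t' = 0 → W (x', t') = 0) := by
  choose P hPdeg hPval using hV
  let a (y : Fin n → ℂ) (s : Fin m → ℂ) (i : Fin n) : ℂ :=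
    ∑ j, s j * eval y (homogenizeAt 0 k (P i j))
  let F := horizontalPushforward k (fun i => X (Sum.inl i)) (fun j => X (Sum.inr j))
    fun i => ∑ j, X (Sum.inr j) * rename Sum.inl (homogenizeAt 0 k (P i j))
  have hF (y : Fin n → ℂ) (s : Fin m → ℂ) :
      Prod.map (eval (Sum.elim y s) ∘ ·) (eval (Sum.elim y s) ∘ ·) F =
        horizontalPushforward k y s (a y s) := by
    rw [map_horizontalPushforward]
    congr 1 <;> ext <;> simp [a, eval_rename, Function.comp_def]
  refine ⟨fun p => horizontalPushforward k p.1 p.2 (a p.1 p.2),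
    ⟨F.1, F.2, fun p => (hF p.1 p.2).symm⟩, fun x t hx => ?_, fun x' t' h => ?_⟩
  · rw [fderiv_bundleChange_apply k hx]
    congr 1
    ext i
    refine sum_congr rfl fun j _ => ?_
    rw [hPval, ← pow_mul_eval_projCoordChange_homogenizeAt (hPdeg i j) hx]
    simp only [bundleChange, Pi.smul_apply, smul_eq_mul]
    ring
  · rcases h with h | rfl
    · exact horizontalPushforward_eq_zero_of_apply_zero_eq_zero k h _ _
    · simp [a, ← Pi.zero_def, horizontalPushforward_zero]

/-- Chart-level content of Lemma 2.2, general `m`: the horizontal vector field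
`V(x,t) = ∑ᵢ ∑ⱼ tⱼ V_{i,j}(x) ∂ₓᵢ`, pushed forward by
`Φ(x,t) = ((1/x₁, x₂/x₁, …, xₙ/x₁), x₁ᵏ t)`, extends to a polynomial vector field `W`
on `ℂⁿ × ℂᵐ` vanishing on `{x'₁ = 0}` and on `{t' = 0}`. -/
theorem extends_to_polynomial_field (n m k : ℕ) [NeZero n] [NeZero m] (hk : 1 ≤ k)
    (V : Fin n → Fin m → (Fin n → ℂ) → ℂ)
    (hV : ∀ i j, ∃ p : MvPolynomial (Fin n) ℂ,
      p.totalDegree ≤ k ∧ ∀ x, V i j x = MvPolynomial.eval x p) :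
    ∃ W : (Fin n → ℂ) × (Fin m → ℂ) → (Fin n → ℂ) × (Fin m → ℂ),
      (∃ Q : Fin n → MvPolynomial (Fin n ⊕ Fin m) ℂ,
       ∃ Qt : Fin m → MvPolynomial (Fin n ⊕ Fin m) ℂ,
        ∀ p : (Fin n → ℂ) × (Fin m → ℂ),
          W p = (fun i => MvPolynomial.eval (Sum.elim p.1 p.2) (Q i),
                 fun j => MvPolynomial.eval (Sum.elim p.1 p.2) (Qt j))) ∧
      (∀ (x : Fin n → ℂ) (t : Fin m → ℂ), x 0 ≠ 0 →
        fderiv ℂ (bundleChange n m k) (x, t)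
            ((fun i => ∑ j, t j * V i j x), (0 : Fin m → ℂ)) =
          W (bundleChange n m k (x, t))) ∧
      (∀ (x' : Fin n → ℂ) (t' : Fin m → ℂ), x' 0 = 0 ∨ t' = 0 → W (x', t') = 0) :=
  extends_to_polynomial_field_general n m k V hV
end

section
/- Let W_1, …, W_m : ℂⁿ → ℂⁿ be Lipschitz maps, let x₀ ∈ ℂⁿ and ε > 0, and suppose x : [0,1] × {t ∈ ℂᵐ : ‖t‖ < ε} → ℂⁿ satisfies x(0, t) = x₀ for all ‖t‖ < ε, and for every τ ∈ [0,1] and every t with ‖t‖ < ε, the curve τ ↦ x(τ, t) is differentiable with ∂x/∂τ(τ, t) = Σ_{j=1}^m t_j W_j(x(τ, t)). Then the map t ↦ x(1, t), defined for ‖t‖ < ε, is Fréchet differentiable at t = 0, with derivative the linear map ℂᵐ → ℂⁿ given by t ↦ Σ_{j=1}^m t_j W_j(x₀). -/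
open Set Real

/-- Auxiliary bound on `gronwallBound`. -/
theorem gronwallBound_aux (K A b x : ℝ) (hA : 0 ≤ A) (hb : 0 ≤ b) (hb1 : b ≤ 1)
    (hK : 0 < K) (hx : 0 ≤ x) (hx1 : x ≤ 1) :
    gronwallBound 0 (b * K) (b * A) x ≤ (A * Real.exp K) * b := by
  rcases eq_or_lt_of_le hb with hb0 | hbpos
  · simp [gronwallBound, ← hb0]
  · have hbK : b * K ≠ 0 := by positivity
    rw [gronwallBound_of_K_ne_0 hbK]
    have hs : 0 ≤ b * K * x := by positivity
    have hsK : b * K * x ≤ K := by nlinarith [mul_le_one₀ hb1 hx hx1]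
    -- exp s - 1 ≤ s * exp s for s ≥ 0
    have key : Real.exp (b * K * x) - 1 ≤ (b * K * x) * Real.exp (b * K * x) := by
      set s := b * K * x with hsdef
      have h1 := Real.add_one_le_exp (-s)
      rw [Real.exp_neg] at h1
      have hp := Real.exp_pos s
      have h2 : (-s + 1) * Real.exp s ≤ (Real.exp s)⁻¹ * Real.exp s :=
        mul_le_mul_of_nonneg_right h1 hp.le
      rw [inv_mul_cancel₀ hp.ne'] at h2
      nlinarith
    have hexp : Real.exp (b * K * x) ≤ Real.exp K := Real.exp_le_exp.2 hsK
    have hAK : b * A / (b * K) = A / K := by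
      field_simp
    rw [hAK]
    have h3 : A / K * (Real.exp (b * K * x) - 1) ≤ A / K * ((b * K * x) * Real.exp K) := by
      apply mul_le_mul_of_nonneg_left _ (by positivity)
      calc Real.exp (b * K * x) - 1 ≤ (b * K * x) * Real.exp (b * K * x) := key
        _ ≤ (b * K * x) * Real.exp K := mul_le_mul_of_nonneg_left hexp hs
    have h4 : A / K * ((b * K * x) * Real.exp K) = (A * Real.exp K) * b * x := by
      field_simp
    rw [h4] at h3
    have h5 : (A * Real.exp K) * b * x ≤ (A * Real.exp K) * b :=
      mul_le_of_le_one_right (by positivity) hx1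
    nlinarith

/-- Vertical derivative of the time-1 flow map along the zero section: if for each
parameter `t` with `‖t‖ < ε` the curve `τ ↦ x(τ,t)` is an integral curve of the field
`∑ⱼ tⱼ Wⱼ` starting at `x₀`, then `t ↦ x(1,t)` is Fréchet differentiable at `t = 0` with
derivative `t ↦ ∑ⱼ tⱼ Wⱼ(x₀)`. -/
theorem flow_vertical_derivative (n m : ℕ) (W : Fin m → (Fin n → ℂ) → (Fin n → ℂ))
    (hW : ∀ j, ∃ K : NNReal, LipschitzWith K (W j))
    (x₀ : Fin n → ℂ) (ε : ℝ) (hε : 0 < ε)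
    (x : ℝ → (Fin m → ℂ) → Fin n → ℂ)
    (hx0 : ∀ t : Fin m → ℂ, ‖t‖ < ε → x 0 t = x₀)
    (hode : ∀ τ ∈ Set.Icc (0 : ℝ) 1, ∀ t : Fin m → ℂ, ‖t‖ < ε →
      HasDerivWithinAt (fun τ' => x τ' t) (∑ j, t j • W j (x τ t)) (Set.Icc (0 : ℝ) 1) τ) :
    ∃ L : (Fin m → ℂ) →L[ℂ] (Fin n → ℂ),
      (∀ t : Fin m → ℂ, L t = ∑ j, t j • W j x₀) ∧
      HasFDerivAt (fun t => x 1 t) L 0 := by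
  choose Kf hKf using hW
  set K : ℝ := (∑ j, (Kf j : ℝ)) + 1 with hKdef
  have hKsum : (0:ℝ) ≤ ∑ j, (Kf j : ℝ) := Finset.sum_nonneg fun j _ => (Kf j).coe_nonneg
  have hKpos : 0 < K := by positivity
  set A : ℝ := ∑ j, ‖W j x₀‖ with hAdef
  have hA : 0 ≤ A := Finset.sum_nonneg fun j _ => norm_nonneg _
  set C0 : ℝ := A * Real.exp K with hC0def
  have hC0 : 0 ≤ C0 := by positivity
  -- Lipschitz estimate for each W j
  have hWest : ∀ j (y : Fin n → ℂ), ‖W j y‖ ≤ ‖W j x₀‖ + (Kf j : ℝ) * ‖y - x₀‖ := by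
    intro j y
    have := (hKf j).dist_le_mul y x₀
    rw [dist_eq_norm] at this
    calc ‖W j y‖ ≤ ‖W j x₀‖ + ‖W j y - W j x₀‖ := by
          have := norm_sub_norm_le (W j y) (W j x₀); linarith [norm_sub_rev (W j y) (W j x₀)]
      _ ≤ ‖W j x₀‖ + (Kf j : ℝ) * ‖y - x₀‖ := by
          rw [dist_eq_norm] at this; linarith
  -- a priori bound
  have apriori : ∀ t : Fin m → ℂ, ‖t‖ < ε → ‖t‖ ≤ 1 → ∀ τ ∈ Icc (0:ℝ) 1,
      ‖x τ t - x₀‖ ≤ C0 * ‖t‖ := by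
    intro t htε ht1 τ hτ
    have hcont : ContinuousOn (fun τ' => x τ' t - x₀) (Icc (0:ℝ) 1) := fun τ' hτ' =>
      ((hode τ' hτ' t htε).continuousWithinAt).sub continuousWithinAt_const
    have hderiv : ∀ τ' ∈ Ico (0:ℝ) 1, HasDerivWithinAt (fun τ' => x τ' t - x₀)
        (∑ j, t j • W j (x τ' t)) (Ici τ') τ' := by
      intro τ' hτ'
      exact (((hode τ' (Ico_subset_Icc_self hτ') t htε).sub_const
        x₀).mono_of_mem_nhdsWithin (Icc_mem_nhdsGE_of_mem hτ'))
    have hbound : ∀ τ' ∈ Ico (0:ℝ) 1,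
        ‖∑ j, t j • W j (x τ' t)‖ ≤ (‖t‖ * K) * ‖x τ' t - x₀‖ + ‖t‖ * A := by
      intro τ' _
      calc ‖∑ j, t j • W j (x τ' t)‖ ≤ ∑ j, ‖t j • W j (x τ' t)‖ := norm_sum_le _ _
        _ ≤ ∑ j, ‖t‖ * (‖W j x₀‖ + (Kf j : ℝ) * ‖x τ' t - x₀‖) := by
            apply Finset.sum_le_sum
            intro j _
            rw [norm_smul]
            exact mul_le_mul (norm_le_pi_norm t j) (hWest j _) (norm_nonneg _)
              (norm_nonneg _)
        _ = ‖t‖ * A + (‖t‖ * (∑ j, (Kf j : ℝ))) * ‖x τ' t - x₀‖ := by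
            have he : ∀ j : Fin m, ‖t‖ * (‖W j x₀‖ + (Kf j : ℝ) * ‖x τ' t - x₀‖)
                = ‖t‖ * ‖W j x₀‖ + (‖t‖ * ‖x τ' t - x₀‖) * (Kf j : ℝ) := fun j => by ring
            rw [Finset.sum_congr rfl (fun j _ => he j), Finset.sum_add_distrib,
              ← Finset.mul_sum, ← Finset.mul_sum, ← hAdef]
            ring
        _ ≤ (‖t‖ * K) * ‖x τ' t - x₀‖ + ‖t‖ * A := by
            have hKK : (∑ j, (Kf j : ℝ)) ≤ K := by rw [hKdef]; linarith
            have : (‖t‖ * (∑ j, (Kf j : ℝ))) * ‖x τ' t - x₀‖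
                ≤ (‖t‖ * K) * ‖x τ' t - x₀‖ :=
              mul_le_mul_of_nonneg_right
                (mul_le_mul_of_nonneg_left hKK (norm_nonneg _)) (norm_nonneg _)
            linarith
    have key := norm_le_gronwallBound_of_norm_deriv_right_le (δ := 0)
      (K := ‖t‖ * K) (ε := ‖t‖ * A) hcont hderiv
      (by simp [hx0 t htε]) hbound τ hτ
    have haux := gronwallBound_aux K A ‖t‖ (τ - 0) hA (norm_nonneg t) ht1 hKpos
      (by simpa using hτ.1) (by simpa using hτ.2)
    calc ‖x τ t - x₀‖ ≤ gronwallBound 0 (‖t‖ * K) (‖t‖ * A) (τ - 0) := key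
      _ ≤ (A * Real.exp K) * ‖t‖ := haux
      _ = C0 * ‖t‖ := rfl
  -- second-order estimate
  have est2 : ∀ t : Fin m → ℂ, ‖t‖ < ε → ‖t‖ ≤ 1 →
      ‖x 1 t - x₀ - (∑ j, t j • W j x₀)‖ ≤ (K * C0) * ‖t‖ ^ 2 := by
    intro t htε ht1
    set S : Fin n → ℂ := ∑ j, t j • W j x₀ with hSdef
    have hf : ∀ τ ∈ Icc (0:ℝ) 1, HasDerivWithinAt (fun τ' => x τ' t - τ' • S)
        ((∑ j, t j • W j (x τ t)) - S) (Icc (0:ℝ) 1) τ := by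
      intro τ hτ
      have h1 := hode τ hτ t htε
      have h2 : HasDerivWithinAt (fun τ' : ℝ => τ' • S) S (Icc (0:ℝ) 1) τ := by
        simpa using (hasDerivWithinAt_id τ (Icc (0:ℝ) 1)).smul_const S
      exact h1.sub h2
    have hbound : ∀ τ ∈ Ico (0:ℝ) 1,
        ‖(∑ j, t j • W j (x τ t)) - S‖ ≤ (K * C0) * ‖t‖ ^ 2 := by
      intro τ hτ
      have hsub : (∑ j, t j • W j (x τ t)) - S = ∑ j, t j • (W j (x τ t) - W j x₀) := by
        rw [hSdef, ← Finset.sum_sub_distrib]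
        apply Finset.sum_congr rfl
        intro j _
        rw [smul_sub]
      rw [hsub]
      have hap := apriori t htε ht1 τ (Ico_subset_Icc_self hτ)
      calc ‖∑ j, t j • (W j (x τ t) - W j x₀)‖
          ≤ ∑ j, ‖t j • (W j (x τ t) - W j x₀)‖ := norm_sum_le _ _
        _ ≤ ∑ j, ‖t‖ * ((Kf j : ℝ) * (C0 * ‖t‖)) := by
            apply Finset.sum_le_sum
            intro j _
            rw [norm_smul]
            apply mul_le_mul (norm_le_pi_norm t j) _ (norm_nonneg _) (norm_nonneg _)
            have hlip := (hKf j).dist_le_mul (x τ t) x₀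
            rw [dist_eq_norm, dist_eq_norm] at hlip
            calc ‖W j (x τ t) - W j x₀‖ ≤ (Kf j : ℝ) * ‖x τ t - x₀‖ := hlip
              _ ≤ (Kf j : ℝ) * (C0 * ‖t‖) :=
                  mul_le_mul_of_nonneg_left hap (Kf j).coe_nonneg
        _ = (∑ j, (Kf j : ℝ)) * (C0 * ‖t‖ ^ 2) := by
            have he : ∀ j : Fin m, ‖t‖ * ((Kf j : ℝ) * (C0 * ‖t‖))
                = (Kf j : ℝ) * (C0 * (‖t‖ * ‖t‖)) := fun j => by ring
            rw [Finset.sum_congr rfl (fun j _ => he j), ← Finset.sum_mul]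
            ring
        _ ≤ (K * C0) * ‖t‖ ^ 2 := by
            have h1 : (∑ j, (Kf j : ℝ)) ≤ K := by simp [hKdef]
            have h2 : (0:ℝ) ≤ C0 * ‖t‖ ^ 2 := by positivity
            nlinarith [sq_nonneg ‖t‖]
    have := norm_image_sub_le_of_norm_deriv_le_segment' hf hbound 1
      (right_mem_Icc.2 zero_le_one)
    simp only [one_smul, zero_smul, sub_zero, hx0 t htε] at this
    calc ‖x 1 t - x₀ - S‖ = ‖x 1 t - S - x₀‖ := by congr 1; abel
      _ ≤ (K * C0) * ‖t‖ ^ 2 * 1 := this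
      _ = (K * C0) * ‖t‖ ^ 2 := by ring
  -- x 1 0 = x₀
  have hx10 : x 1 0 = x₀ := by
    have h := est2 0 (by simpa using hε) (by simp)
    have e : (∑ j, (0 : Fin m → ℂ) j • W j x₀) = 0 := by simp
    rw [e, sub_zero, norm_zero] at h
    have h0 : K * C0 * (0:ℝ) ^ 2 = 0 := by ring
    rw [← sub_eq_zero]
    exact norm_le_zero_iff.1 (by linarith)
  -- the continuous linear map
  set L : (Fin m → ℂ) →L[ℂ] (Fin n → ℂ) :=
    ∑ j, (ContinuousLinearMap.proj j : (Fin m → ℂ) →L[ℂ] ℂ).smulRight (W j x₀) with hLdef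
  have hL : ∀ t : Fin m → ℂ, L t = ∑ j, t j • W j x₀ := by
    intro t
    simp [hLdef, ContinuousLinearMap.sum_apply]
  refine ⟨L, hL, ?_⟩
  rw [hasFDerivAt_iff_isLittleO_nhds_zero]
  have hbigO : (fun h : Fin m → ℂ => x 1 (0 + h) - x 1 0 - L h)
      =O[nhds 0] fun h : Fin m → ℂ => ‖h‖ ^ 2 := by
    rw [Asymptotics.isBigO_iff]
    refine ⟨K * C0, ?_⟩
    filter_upwards [Metric.ball_mem_nhds (0 : Fin m → ℂ) (lt_min hε one_pos)] with h hh
    rw [mem_ball_zero_iff] at hh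
    have h1 : ‖h‖ < ε := lt_of_lt_of_le hh (min_le_left _ _)
    have h2 : ‖h‖ ≤ 1 := le_of_lt (lt_of_lt_of_le hh (min_le_right _ _))
    have hest := est2 h h1 h2
    rw [zero_add, hx10, hL]
    rw [Real.norm_of_nonneg (sq_nonneg ‖h‖)]
    exact hest
  exact hbigO.trans_isLittleO (Asymptotics.isLittleO_norm_pow_id one_lt_two)
end

section
/- Under the hypotheses of the previous statement — W_1, …, W_m : ℂⁿ → ℂⁿ Lipschitz, x₀ ∈ ℂⁿ, ε > 0, and x : [0,1] × {t ∈ ℂᵐ : ‖t‖ < ε} → ℂⁿ with x(0,t) = x₀ and ∂x/∂τ(τ,t) = Σ_{j=1}^m t_j W_j(x(τ,t)) for all τ ∈ [0,1] and ‖t‖ < ε — if in addition the vectors W_1(x₀), …, W_m(x₀) span ℂⁿ over ℂ, then the map t ↦ x(1,t) is Fréchet differentiable at t = 0 and its derivative is a surjective linear map ℂᵐ → ℂⁿ. -/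
open Set Filter Metric Real


set_option maxHeartbeats 1600000 in
/-- Domination of the time-1 flow map: under the hypotheses of the previous statement, if
moreover the vectors `W₁(x₀), …, Wₘ(x₀)` span `ℂⁿ`, then `t ↦ x(1,t)` is Fréchet
differentiable at `t = 0` with surjective derivative. -/
theorem flow_vertical_derivative_surjective (n m : ℕ)
    (W : Fin m → (Fin n → ℂ) → (Fin n → ℂ))
    (hW : ∀ j, ∃ K : NNReal, LipschitzWith K (W j))
    (x₀ : Fin n → ℂ) (ε : ℝ) (hε : 0 < ε)
    (x : ℝ → (Fin m → ℂ) → Fin n → ℂ)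
    (hx0 : ∀ t : Fin m → ℂ, ‖t‖ < ε → x 0 t = x₀)
    (hode : ∀ τ ∈ Set.Icc (0 : ℝ) 1, ∀ t : Fin m → ℂ, ‖t‖ < ε →
      HasDerivWithinAt (fun τ' => x τ' t) (∑ j, t j • W j (x τ t)) (Set.Icc (0 : ℝ) 1) τ)
    (hspan : Submodule.span ℂ (Set.range fun j => W j x₀) = ⊤) :
    ∃ L : (Fin m → ℂ) →L[ℂ] (Fin n → ℂ),
      HasFDerivAt (fun t => x 1 t) L 0 ∧ Function.Surjective L := by
  classical
  choose K hK using hW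
  set Ks : ℝ := ∑ j, (K j : ℝ) with hKsdef
  have hKs0 : (0:ℝ) ≤ Ks := Finset.sum_nonneg fun j _ => (K j).coe_nonneg
  set M : ℝ := ∑ j, ‖W j x₀‖ with hMdef
  have hM0 : (0:ℝ) ≤ M := Finset.sum_nonneg fun j _ => norm_nonneg _
  set K₁ : ℝ := Ks + 1 with hK₁def
  have hK₁1 : (1:ℝ) ≤ K₁ := by simp [hK₁def]; linarith
  have hK₁0 : (0:ℝ) < K₁ := by linarith
  -- individual Lipschitz bounds
  have hKj : ∀ j, (K j : ℝ) ≤ Ks := fun j =>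
    Finset.single_le_sum (fun i _ => (K i).coe_nonneg) (Finset.mem_univ j)
  have hlip : ∀ j (y : Fin n → ℂ), ‖W j y - W j x₀‖ ≤ (K j : ℝ) * ‖y - x₀‖ := by
    intro j y
    simpa [dist_eq_norm] using (hK j).dist_le_mul y x₀
  -- first estimate: Gronwall
  set C : ℝ := M * Real.exp K₁ with hCdef
  have hC0 : 0 ≤ C := mul_nonneg hM0 (Real.exp_nonneg _)
  have key : ∀ t : Fin m → ℂ, ‖t‖ < ε → ‖t‖ ≤ 1 → ∀ τ ∈ Icc (0:ℝ) 1,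
      ‖x τ t - x₀‖ ≤ C * ‖t‖ := by
    intro t ht ht1 τ hτ
    have hcont : ContinuousOn (fun τ' => x τ' t - x₀) (Icc (0:ℝ) 1) := by
      intro s hs
      exact ((hode s hs t ht).continuousWithinAt).sub continuousWithinAt_const
    have hderiv : ∀ s ∈ Ico (0:ℝ) 1, HasDerivWithinAt (fun τ' => x τ' t - x₀)
        ((fun s => ∑ j, t j • W j (x s t)) s) (Ici s) s := by
      intro s hs
      have h1 := (hode s (Ico_subset_Icc_self hs) t ht).sub_const x₀
      have h2 : HasDerivWithinAt (fun τ' => x τ' t - x₀)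
          (∑ j, t j • W j (x s t)) (Icc s 1) s :=
        h1.mono (Icc_subset_Icc hs.1 le_rfl)
      exact h2.mono_of_mem_nhdsWithin (Icc_mem_nhdsGE_of_mem ⟨le_rfl, hs.2⟩)
    have hbound : ∀ s ∈ Ico (0:ℝ) 1,
        ‖∑ j, t j • W j (x s t)‖ ≤ K₁ * ‖x s t - x₀‖ + M * ‖t‖ := by
      intro s hs
      set g : ℝ := ‖x s t - x₀‖ with hgdef
      have hg0 : 0 ≤ g := norm_nonneg _
      have h1 : ‖∑ j, t j • W j (x s t)‖ ≤ ∑ j, ‖t‖ * (‖W j x₀‖ + (K j : ℝ) * g) := by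
        refine (norm_sum_le _ _).trans (Finset.sum_le_sum fun j _ => ?_)
        rw [norm_smul]
        have h2 : ‖W j (x s t)‖ ≤ ‖W j x₀‖ + (K j : ℝ) * g := by
          have h3 := hlip j (x s t)
          have h4 := norm_sub_norm_le (W j (x s t)) (W j x₀)
          rw [hgdef]; linarith
        exact mul_le_mul (norm_le_pi_norm t j) h2 (norm_nonneg _) (norm_nonneg t)
      have h5 : ∑ j, ‖t‖ * (‖W j x₀‖ + (K j : ℝ) * g) = ‖t‖ * M + (‖t‖ * g) * Ks := by
        rw [hMdef, hKsdef, Finset.mul_sum, Finset.mul_sum, ← Finset.sum_add_distrib]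
        exact Finset.sum_congr rfl fun j _ => by ring
      rw [h5] at h1
      have h6 : ‖t‖ * g * Ks ≤ K₁ * g := by
        have : ‖t‖ * g ≤ g := by nlinarith [norm_nonneg t]
        nlinarith
      nlinarith
    have hg := norm_le_gronwallBound_of_norm_deriv_right_le (δ := 0) hcont hderiv
      (by simp [hx0 t ht]) hbound τ hτ
    have : gronwallBound 0 K₁ (M * ‖t‖) (τ - 0) ≤ C * ‖t‖ := by
      rw [gronwallBound_of_K_ne_0 (ne_of_gt hK₁0)]
      simp only [zero_mul, zero_add, sub_zero]
      have h1 : Real.exp (K₁ * τ) - 1 ≤ Real.exp K₁ := by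
        have h7 : K₁ * τ ≤ K₁ * 1 := by nlinarith [hτ.2]
        have h8 := Real.exp_le_exp.mpr h7
        rw [mul_one] at h8; linarith
      have h2 : M * ‖t‖ / K₁ ≤ M * ‖t‖ := by
        rw [div_le_iff₀ hK₁0]; nlinarith [mul_nonneg hM0 (norm_nonneg t)]
      calc M * ‖t‖ / K₁ * (Real.exp (K₁ * τ) - 1) ≤ M * ‖t‖ / K₁ * Real.exp K₁ :=
            mul_le_mul_of_nonneg_left h1 (by positivity)
        _ ≤ M * ‖t‖ * Real.exp K₁ := mul_le_mul_of_nonneg_right h2 (Real.exp_nonneg _)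
        _ = C * ‖t‖ := by ring
    exact hg.trans this
  -- x 1 0 = x₀
  have hzero : x 1 0 = x₀ := by
    have h0ε : ‖(0 : Fin m → ℂ)‖ < ε := by simpa using hε
    have hmv := Convex.norm_image_sub_le_of_norm_hasDerivWithin_le
      (f := fun τ' => x τ' (0 : Fin m → ℂ)) (C := 0) (s := Icc (0:ℝ) 1)
      (fun τ hτ => hode τ hτ 0 h0ε) (fun τ _ => by simp) (convex_Icc 0 1)
      (left_mem_Icc.2 zero_le_one) (right_mem_Icc.2 zero_le_one)
    have : ‖x 1 (0 : Fin m → ℂ) - x 0 (0 : Fin m → ℂ)‖ ≤ 0 := by simpa using hmv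
    have h4 : x 1 (0 : Fin m → ℂ) = x 0 (0 : Fin m → ℂ) := by
      have := norm_le_zero_iff.mp this; rwa [sub_eq_zero] at this
    rw [h4, hx0 0 h0ε]
  -- the candidate derivative
  set L : (Fin m → ℂ) →L[ℂ] (Fin n → ℂ) :=
    ∑ j, (ContinuousLinearMap.proj j).smulRight (W j x₀) with hLdef
  have hLapp : ∀ t : Fin m → ℂ, L t = ∑ j, t j • W j x₀ := by
    intro t
    simp [hLdef, ContinuousLinearMap.sum_apply]
  -- second estimate
  set C₂ : ℝ := Ks * C with hC₂def
  have hC₂0 : 0 ≤ C₂ := mul_nonneg hKs0 hC0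
  have key2 : ∀ t : Fin m → ℂ, ‖t‖ < ε → ‖t‖ ≤ 1 →
      ‖x 1 t - x₀ - L t‖ ≤ C₂ * ‖t‖ * ‖t‖ := by
    intro t ht ht1
    set v : Fin n → ℂ := ∑ j, t j • W j x₀ with hvdef
    have hderiv : ∀ τ ∈ Icc (0:ℝ) 1, HasDerivWithinAt (fun τ' => x τ' t - τ' • v - x₀)
        ((∑ j, t j • W j (x τ t)) - v) (Icc (0:ℝ) 1) τ := by
      intro τ hτ
      have h1 := hode τ hτ t ht
      have h2 : HasDerivWithinAt (fun τ' : ℝ => τ' • v) v (Icc (0:ℝ) 1) τ := by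
        simpa using ((hasDerivAt_id τ).smul_const v).hasDerivWithinAt
      exact (h1.sub h2).sub_const x₀
    have hbound : ∀ τ ∈ Icc (0:ℝ) 1, ‖(∑ j, t j • W j (x τ t)) - v‖ ≤ C₂ * ‖t‖ * ‖t‖ := by
      intro τ hτ
      have h1 : (∑ j, t j • W j (x τ t)) - v = ∑ j, t j • (W j (x τ t) - W j x₀) := by
        rw [hvdef, ← Finset.sum_sub_distrib]
        exact Finset.sum_congr rfl fun j _ => (smul_sub _ _ _).symm
      rw [h1]
      have h2 : ∀ j : Fin m, ‖t j • (W j (x τ t) - W j x₀)‖ ≤ ‖t‖ * ((K j : ℝ) * (C * ‖t‖)) := by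
        intro j
        rw [norm_smul]
        refine mul_le_mul (norm_le_pi_norm t j) ?_ (norm_nonneg _) (norm_nonneg t)
        exact (hlip j (x τ t)).trans
          (mul_le_mul_of_nonneg_left (key t ht ht1 τ hτ) (K j).coe_nonneg)
      calc ‖∑ j, t j • (W j (x τ t) - W j x₀)‖ ≤ ∑ j, ‖t‖ * ((K j : ℝ) * (C * ‖t‖)) :=
            (norm_sum_le _ _).trans (Finset.sum_le_sum fun j _ => h2 j)
        _ = C₂ * ‖t‖ * ‖t‖ := by
            have e : ∑ j, ‖t‖ * ((K j : ℝ) * (C * ‖t‖)) = Ks * C * ‖t‖ * ‖t‖ := by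
              rw [hKsdef, Finset.sum_mul, Finset.sum_mul, Finset.sum_mul]
              refine Finset.sum_congr rfl fun j _ => ?_
              ring
            rw [e, hC₂def]
    have hmv := Convex.norm_image_sub_le_of_norm_hasDerivWithin_le
      (f := fun τ' => x τ' t - τ' • v - x₀) (C := C₂ * ‖t‖ * ‖t‖) (s := Icc (0:ℝ) 1)
      hderiv hbound (convex_Icc 0 1) (left_mem_Icc.2 zero_le_one) (right_mem_Icc.2 zero_le_one)
    have h3 : x 0 t - (0:ℝ) • v - x₀ = 0 := by simp [hx0 t ht]
    have h4 : x 1 t - (1:ℝ) • v - x₀ = x 1 t - x₀ - L t := by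
      rw [hLapp, one_smul, hvdef]; abel
    have hmv' : ‖(x 1 t - (1:ℝ) • v - x₀) - (x 0 t - (0:ℝ) • v - x₀)‖ ≤
        C₂ * ‖t‖ * ‖t‖ * ‖(1:ℝ) - 0‖ := hmv
    rw [h3, h4, sub_zero] at hmv'
    simpa using hmv' 
  refine ⟨L, ?_, ?_⟩
  · rw [hasFDerivAt_iff_isLittleO_nhds_zero]
    rw [Asymptotics.isLittleO_iff]
    intro c hc
    have hr0 : 0 < min ε (min 1 (c / (C₂ + 1))) := by
      refine lt_min hε (lt_min one_pos ?_)
      positivity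
    filter_upwards [Metric.ball_mem_nhds (0 : Fin m → ℂ) hr0] with t htb
    rw [mem_ball_zero_iff] at htb
    have ht : ‖t‖ < ε := lt_of_lt_of_le htb (min_le_left _ _)
    have ht1 : ‖t‖ ≤ 1 := le_of_lt (lt_of_lt_of_le htb ((min_le_right _ _).trans (min_le_left _ _)))
    have htc : ‖t‖ ≤ c / (C₂ + 1) :=
      le_of_lt (lt_of_lt_of_le htb ((min_le_right _ _).trans (min_le_right _ _)))
    have h1 : ‖x 1 (0 + t) - x 1 0 - L t‖ ≤ C₂ * ‖t‖ * ‖t‖ := by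
      simpa [hzero] using key2 t ht ht1
    refine h1.trans ?_
    have h2 : C₂ * ‖t‖ ≤ c := by
      have h3 : (C₂ + 1) * ‖t‖ ≤ c := by
        have := mul_le_mul_of_nonneg_left htc (le_of_lt (show (0:ℝ) < C₂ + 1 by linarith))
        calc (C₂ + 1) * ‖t‖ ≤ (C₂ + 1) * (c / (C₂ + 1)) := by
              exact mul_le_mul_of_nonneg_left htc (by linarith)
          _ = c := by field_simp
      nlinarith [norm_nonneg t]
    calc C₂ * ‖t‖ * ‖t‖ ≤ c * ‖t‖ := mul_le_mul_of_nonneg_right h2 (norm_nonneg t)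
      _ = c * ‖id t‖ := by simp
  · -- surjectivity
    have hmem : ∀ j, W j x₀ ∈ LinearMap.range (L : (Fin m → ℂ) →ₗ[ℂ] (Fin n → ℂ)) := by
      intro j
      refine ⟨Pi.single j 1, ?_⟩
      show L (Pi.single j 1) = W j x₀
      rw [hLapp]
      rw [Finset.sum_eq_single j]
      · simp
      · intro i _ hij; simp [Pi.single_apply, hij]
      · intro h; exact absurd (Finset.mem_univ j) h
    have htop : (⊤ : Submodule ℂ (Fin n → ℂ)) ≤
        LinearMap.range (L : (Fin m → ℂ) →ₗ[ℂ] (Fin n → ℂ)) := by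
      rw [← hspan]
      refine Submodule.span_le.2 ?_
      rintro _ ⟨j, rfl⟩
      exact hmem j
    intro y
    obtain ⟨u, hu⟩ := htop (Submodule.mem_top (x := y))
    exact ⟨u, hu⟩
end

section
/- Let n, l, d ≥ 1 and r ≥ 1 be integers, and let s : ℂⁿ × ℂˡ → ℂ^d be a continuously (complex) differentiable map. Let x₀ ∈ ℂⁿ and let v_1, …, v_d ∈ ℂˡ be vectors such that the partial derivatives D₂s(x₀, 0)(v_1), …, D₂s(x₀, 0)(v_d) of s in the second variable at the point (x₀, 0) form a basis of ℂ^d. Then there exists an open neighbourhood U of (x₀, 0) in ℂⁿ × ℂˡ such that for every (x, t) ∈ U with t_1 ≠ 0, the map ℂ^d → ℂ^d given by ζ = (ζ_1, …, ζ_d) ↦ s(x, t + t_1^r (ζ_1 v_1 + ⋯ + ζ_d v_d)) has invertible (in particular surjective) Fréchet derivative at ζ = 0. -/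
/-!
Write `∂₂s(p)` for the derivative of `s` along `{x} × ℂˡ` at `p = (x, t)` and `V ζ = ∑ ζᵢ vᵢ`.
By the chain rule the derivative of `ζ ↦ s(x, t + t₁ʳ V ζ)` at `0` is `t₁ʳ • (∂₂s(x, t) ∘ V)`.
The hypothesis says exactly that `∂₂s(x₀, 0) ∘ V` is invertible. Since `s` is `C¹` and the
invertible operators form an open set, `∂₂s(x, t) ∘ V` stays invertible near `(x₀, 0)`, and
multiplying it by the scalar `t₁ʳ ≠ 0` keeps it invertible.
-/

open ContinuousLinearMap Function

section Calculus

variable {𝕜 E F G H : Type*} [NontriviallyNormedField 𝕜]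
  [NormedAddCommGroup E] [NormedSpace 𝕜 E] [NormedAddCommGroup F] [NormedSpace 𝕜 F]
  [NormedAddCommGroup G] [NormedSpace 𝕜 G] [NormedAddCommGroup H] [NormedSpace 𝕜 H]

theorem DifferentiableAt.hasFDerivAt_comp_prodMk {s : E × F → G} {x : E} {t : F}
    (hs : DifferentiableAt 𝕜 s (x, t)) :
    HasFDerivAt (fun u => s (x, u)) ((fderiv 𝕜 s (x, t)).comp (inr 𝕜 E F)) t :=
  hs.hasFDerivAt.comp t (hasFDerivAt_prodMk_right x t)

theorem DifferentiableAt.hasFDerivAt_comp_prodMk_add_clm {s : E × F → G} {x : E} {t : F}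
    (hs : DifferentiableAt 𝕜 s (x, t)) (L : H →L[𝕜] F) :
    HasFDerivAt (fun ζ => s (x, t + L ζ)) ((fderiv 𝕜 s (x, t)).comp ((inr 𝕜 E F).comp L)) 0 := by
  have hs' :
      HasFDerivAt (fun u => s (x, u)) ((fderiv 𝕜 s (x, t)).comp (inr 𝕜 E F)) (t + L 0) := by
    simpa using hs.hasFDerivAt_comp_prodMk
  exact (hs'.comp 0 (L.hasFDerivAt.const_add t) :)

theorem ContDiff.isOpen_setOf_isUnit_fderiv_comp [CompleteSpace G] {f : E → G}
    (hf : ContDiff 𝕜 1 f) (M : G →L[𝕜] E) : IsOpen {p | IsUnit ((fderiv 𝕜 f p).comp M)} :=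
  (Units.isOpen (R := G →L[𝕜] G)).preimage
    ((hf.continuous_fderiv one_ne_zero).clm_comp continuous_const)

theorem ContinuousLinearMap.bijective_smul [CompleteSpace G] {A : G →L[𝕜] G} (hA : IsUnit A)
    {c : 𝕜} (hc : c ≠ 0) : Bijective (c • A) :=
  (MulAction.bijective (Units.mk0 c hc)).comp (isUnit_iff_bijective.1 hA)

end Calculus

theorem LinearMap.bijective_comp_fintypeLinearCombination {R M N ι : Type*} [CommSemiring R]
    [AddCommMonoid M] [Module R M] [AddCommMonoid N] [Module R N] [Fintype ι]
    (T : M →ₗ[R] N) (v : ι → M) (hli : LinearIndependent R (T ∘ v))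
    (hspan : Submodule.span R (Set.range (T ∘ v)) = ⊤) :
    Bijective (T ∘ Fintype.linearCombination R v) := by
  have hcomp : T ∘ Fintype.linearCombination R v = Fintype.linearCombination R (T ∘ v) := by
    funext ζ
    simp [Fintype.linearCombination_apply]
  rw [hcomp]
  exact ⟨hli.fintypeLinearCombination_injective,
    (span_range_eq_top_iff_surjective_fintypeLinearCombination R _).1 hspan⟩

theorem local_spray_domination_general (n l d r : ℕ) [NeZero l]
    (s : (Fin n → ℂ) × (Fin l → ℂ) → Fin d → ℂ) (hs : ContDiff ℂ 1 s)
    (x₀ : Fin n → ℂ) (v : Fin d → Fin l → ℂ)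
    (hindep : LinearIndependent ℂ
      (fun i => fderiv ℂ (fun u : Fin l → ℂ => s (x₀, u)) 0 (v i)))
    (hspan : Submodule.span ℂ
      (Set.range fun i => fderiv ℂ (fun u : Fin l → ℂ => s (x₀, u)) 0 (v i)) = ⊤) :
    ∃ U : Set ((Fin n → ℂ) × (Fin l → ℂ)), IsOpen U ∧ (x₀, (0 : Fin l → ℂ)) ∈ U ∧
      ∀ (x : Fin n → ℂ) (t : Fin l → ℂ), (x, t) ∈ U → t 0 ≠ 0 →
        Function.Bijective
          (fderiv ℂ (fun ζ : Fin d → ℂ => s (x, t + (t 0) ^ r • ∑ i, ζ i • v i)) 0) := by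
  have hdiff : Differentiable ℂ s := hs.differentiable one_ne_zero
  let V : (Fin d → ℂ) →L[ℂ] (Fin l → ℂ) :=
    (Fintype.linearCombination ℂ v).toContinuousLinearMap
  have hbase : IsUnit ((fderiv ℂ s (x₀, 0)).comp ((inr ℂ _ _).comp V)) := by
    rw [isUnit_iff_bijective]
    rw [(hdiff _).hasFDerivAt_comp_prodMk.fderiv] at hindep hspan
    exact LinearMap.bijective_comp_fintypeLinearCombination _ v hindep hspan
  refine ⟨_, hs.isOpen_setOf_isUnit_fderiv_comp ((inr ℂ _ _).comp V), hbase, fun x t hxt ht => ?_⟩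
  have hderiv : HasFDerivAt (fun ζ : Fin d → ℂ => s (x, t + (t 0) ^ r • ∑ i, ζ i • v i)) _ 0 :=
    (hdiff (x, t)).hasFDerivAt_comp_prodMk_add_clm ((t 0 ^ r) • V)
  rw [comp_smul, comp_smul] at hderiv
  rw [hderiv.fderiv]
  exact bijective_smul hxt (pow_ne_zero r ht)

/-- Chart-level content of Lemma 2.3: if `s : ℂⁿ × ℂˡ → ℂ^d` is `C¹` over `ℂ` and the
partial derivatives `D₂s(x₀,0)(v₁), …, D₂s(x₀,0)(v_d)` form a basis of `ℂ^d`, then for all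
`(x,t)` near `(x₀,0)` with `t₁ ≠ 0`, the map `ζ ↦ s(x, t + t₁^r ∑ᵢ ζᵢ vᵢ)` has invertible
(in particular surjective) Fréchet derivative at `ζ = 0`. -/
theorem local_spray_domination (n l d r : ℕ) [NeZero n] [NeZero l] [NeZero d] (hr : 1 ≤ r)
    (s : (Fin n → ℂ) × (Fin l → ℂ) → Fin d → ℂ) (hs : ContDiff ℂ 1 s)
    (x₀ : Fin n → ℂ) (v : Fin d → Fin l → ℂ)
    (hindep : LinearIndependent ℂ
      (fun i => fderiv ℂ (fun u : Fin l → ℂ => s (x₀, u)) 0 (v i)))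
    (hspan : Submodule.span ℂ
      (Set.range fun i => fderiv ℂ (fun u : Fin l → ℂ => s (x₀, u)) 0 (v i)) = ⊤) :
    ∃ U : Set ((Fin n → ℂ) × (Fin l → ℂ)), IsOpen U ∧ (x₀, (0 : Fin l → ℂ)) ∈ U ∧
      ∀ (x : Fin n → ℂ) (t : Fin l → ℂ), (x, t) ∈ U → t 0 ≠ 0 →
        Function.Bijective
          (fderiv ℂ (fun ζ : Fin d → ℂ => s (x, t + (t 0) ^ r • ∑ i, ζ i • v i)) 0) :=
  local_spray_domination_general n l d r s hs x₀ v hindep hspan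
end
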